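/- Assuming a conditional independence oracle and a distribution faithful to a directed maximal ancestral graph, the Forward-Backward with Early Dropping algorithm with unlimited Runs returns the Markov blanket of T: by induction, after k Runs all variables connected to T by a collider path of length at most k are selected, and the backward phase removes all selected variables outside the Markov blanket. -/
import Mathlib


open scoped Classical

section MAG

variable {V : Type*}

/-- In a mixed graph with directed edges `D` and bi-directed edges `B`, an edge between
`a` and `b` which points into `b`. -/
def Into (D B : V → V → Prop) (a b : V) : Prop := D a b ∨ B a b

/-- Adjacency in a mixed graph. -/
def MAdj (D B : V → V → Prop) (a b : V) : Prop := D a b ∨ D b a ∨ B a b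

/-- m-connection in a directed maximal ancestral graph with directed edges `D` and
bi-directed edges `B`: the vertex list `p` is a path from `x` to `y` whose every collider
is in `Z` or has a descendant (via directed edges) in `Z`, and no non-collider is in `Z`. -/
def MConnecting (D B : V → V → Prop) (Z : Set V) (p : List V) (x y : V) : Prop :=
  2 ≤ p.length ∧ p.head? = some x ∧ p.getLast? = some y ∧
  p.Chain' (MAdj D B) ∧ p.Nodup ∧
  ∀ i (h : i + 2 < p.length),
    let a := p.get ⟨i, by omega⟩
    let b := p.get ⟨i + 1, by omega⟩
    let c := p.get ⟨i + 2, h⟩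
    ((Into D B a b ∧ Into D B c b) → (b ∈ Z ∨ ∃ d ∈ Z, Relation.ReflTransGen D b d)) ∧
    (¬(Into D B a b ∧ Into D B c b) → b ∉ Z)

/-- m-separation. -/
def MSeparated (D B : V → V → Prop) (Z : Set V) (x y : V) : Prop :=
  ¬ ∃ p : List V, MConnecting D B Z p x y

/-- A collider path from `x` to `y`: a path all of whose intermediate vertices are
colliders. -/
def ColliderPath (D B : V → V → Prop) (p : List V) (x y : V) : Prop :=
  2 ≤ p.length ∧ p.head? = some x ∧ p.getLast? = some y ∧
  p.Chain' (MAdj D B) ∧ p.Nodup ∧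
  ∀ i (h : i + 2 < p.length),
    Into D B (p.get ⟨i, by omega⟩) (p.get ⟨i + 1, by omega⟩) ∧
    Into D B (p.get ⟨i + 2, h⟩) (p.get ⟨i + 1, by omega⟩)

end MAG

section Algorithm

variable {V : Type*} [Fintype V] [DecidableEq V] (D B : V → V → Prop) (T : V)

/-- One step of the forward phase with Early Dropping, using the m-separation oracle
(faithfulness): a remaining variable dependent on `T` given the current selection `S` is
selected, and every remaining variable independent of `T` given `S` is dropped. -/
def FwdStep (p q : Finset V × Finset V) : Prop :=
  ∃ x ∈ p.2, ¬ MSeparated D B ↑p.1 T x ∧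
    q.1 = insert x p.1 ∧
    q.2 = (p.2.filter fun y => ¬ MSeparated D B ↑p.1 T y).erase x

/-- The forward phase is finished. -/
def FwdDone (p : Finset V × Finset V) : Prop :=
  ∀ y ∈ p.2, MSeparated D B ↑p.1 T y

/-- A complete forward phase starting from selection `S₀`. -/
def FwdPhase (S₀ S₁ : Finset V) : Prop :=
  ∃ R₁, Relation.ReflTransGen (FwdStep D B T) (S₀, (Finset.univ.erase T) \ S₀) (S₁, R₁) ∧
    FwdDone D B T (S₁, R₁)

/-- One backward-elimination step. -/
def BackStep (S S' : Finset V) : Prop :=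
  ∃ x ∈ S, MSeparated D B ↑(S.erase x) T x ∧ S' = S.erase x

/-- Backward elimination is finished. -/
def BackDone (S : Finset V) : Prop :=
  ∀ x ∈ S, ¬ MSeparated D B ↑(S.erase x) T x

/-- A complete backward phase. -/
def BackPhase (S₀ S₁ : Finset V) : Prop :=
  Relation.ReflTransGen (BackStep D B T) S₀ S₁ ∧ BackDone D B T S₁

/-- One Run of Forward-Backward with Early Dropping. -/
def FBEDRun (S₀ S₁ : Finset V) : Prop :=
  ∃ Sf, FwdPhase D B T S₀ Sf ∧ BackPhase D B T Sf S₁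

/-- The Markov blanket of `T` in a DMAG: all vertices connected to `T` by a collider path
(this includes all vertices adjacent to `T`). -/
noncomputable def magMB : Finset V :=
  Finset.univ.filter fun x => x ≠ T ∧ ∃ p : List V, ColliderPath D B p T x

end Algorithm

section AuxList
variable {V : Type*}

lemma head?_eq_some_get {p : List V} (h : 0 < p.length) : p.head? = some (p.get ⟨0, h⟩) := by
  cases p with
  | nil => simp at h
  | cons a l => rfl

lemma getLast?_eq_some_get {p : List V} (h : 0 < p.length) :
    p.getLast? = some (p.get ⟨p.length - 1, by omega⟩) := by
  rw [List.getLast?_eq_getElem?]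
  simp [List.getElem?_eq_getElem, List.get_eq_getElem]

lemma head?_get {p : List V} {x : V} (hh : p.head? = some x) (h : 0 < p.length) :
    p.get ⟨0, h⟩ = x := by
  rw [head?_eq_some_get h] at hh; exact (Option.some.inj hh)

lemma getLast?_get {p : List V} {x : V} (hl : p.getLast? = some x) (h : 0 < p.length) :
    p.get ⟨p.length - 1, by omega⟩ = x := by
  rw [getLast?_eq_some_get h] at hl; exact (Option.some.inj hl)

lemma get_take' {p : List V} {n i : ℕ} (h : i < (p.take n).length) :
    (p.take n).get ⟨i, h⟩ = p.get ⟨i, by simp at h; omega⟩ := by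
  simp [List.get_eq_getElem, List.getElem_take]

lemma colliderPath_take (D B : V → V → Prop) (T : V) {p : List V}
    (hh : p.head? = some T) (hc : p.Chain' (MAdj D B)) (hn : p.Nodup)
    {m : ℕ} (h1 : 1 ≤ m) (hm : m + 1 < p.length)
    (hcol : ∀ i (hi : i + 2 < m + 1),
      Into D B (p.get ⟨i, by omega⟩) (p.get ⟨i + 1, by omega⟩) ∧
      Into D B (p.get ⟨i + 2, by omega⟩) (p.get ⟨i + 1, by omega⟩)) :
    ColliderPath D B (p.take (m + 1)) T (p.get ⟨m, by omega⟩) := by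
  have hlen : (p.take (m + 1)).length = m + 1 := by
    simp; omega
  refine ⟨by omega, ?_, ?_, hc.take _, hn.sublist (List.take_sublist _ _), ?_⟩
  · rw [head?_eq_some_get (by omega)]
    rw [get_take']
    rw [head?_get hh (by omega)]
  · rw [getLast?_eq_some_get (by omega)]
    congr 1
    have : (p.take (m + 1)).length - 1 = m := by omega
    rw [show (⟨(p.take (m+1)).length - 1, by omega⟩ : Fin (p.take (m+1)).length)
        = ⟨m, by omega⟩ from Fin.ext this]
    rw [get_take']
  · intro i hi
    have hi' : i + 2 < m + 1 := by omega
    have h3 := hcol i hi'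
    constructor
    · rw [get_take', get_take']; exact h3.1
    · rw [get_take', get_take']; exact h3.2

end AuxList

section Aux2

open Finset

variable {V : Type*} [Fintype V] [DecidableEq V]

/-- Vertices reachable from `T` by a collider path with at most `k` vertices. -/
noncomputable def Ak (D B : V → V → Prop) (T : V) (k : ℕ) : Finset V :=
  Finset.univ.filter fun x => x ≠ T ∧ ∃ p : List V, ColliderPath D B p T x ∧ p.length ≤ k

lemma mem_Ak {D B : V → V → Prop} {T x : V} {k : ℕ} :
    x ∈ Ak D B T k ↔ x ≠ T ∧ ∃ p : List V, ColliderPath D B p T x ∧ p.length ≤ k := by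
  simp [Ak]

lemma mem_magMB' {D B : V → V → Prop} {T x : V} :
    x ∈ magMB D B T ↔ x ≠ T ∧ ∃ p : List V, ColliderPath D B p T x := by
  simp [magMB]

lemma Ak_mono {D B : V → V → Prop} {T : V} {k l : ℕ} (h : k ≤ l) :
    Ak D B T k ⊆ Ak D B T l := by
  intro x hx
  rw [mem_Ak] at hx ⊢
  obtain ⟨h1, p, hp, hl⟩ := hx
  exact ⟨h1, p, hp, hl.trans h⟩

lemma Ak_subset_magMB {D B : V → V → Prop} {T : V} {k : ℕ} :
    Ak D B T k ⊆ magMB D B T := by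
  intro x hx
  rw [mem_Ak] at hx
  rw [mem_magMB']
  exact ⟨hx.1, hx.2.choose, hx.2.choose_spec.1⟩

lemma Ak_eq_magMB {D B : V → V → Prop} {T : V} {k : ℕ} (h : Fintype.card V ≤ k) :
    Ak D B T k = magMB D B T := by
  refine subset_antisymm Ak_subset_magMB ?_
  intro x hx
  rw [mem_magMB'] at hx
  obtain ⟨h1, p, hp⟩ := hx
  exact mem_Ak.mpr ⟨h1, p, hp, (hp.2.2.2.2.1.length_le_card).trans h⟩

lemma Ak_zero {D B : V → V → Prop} {T : V} : Ak D B T 0 = ∅ := by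
  ext x
  simp only [mem_Ak, Finset.notMem_empty, iff_false, not_and]
  rintro h1 ⟨p, hp, hl⟩
  have := hp.1
  omega

lemma ne_T_of_mem_Ak {D B : V → V → Prop} {T x : V} {k : ℕ} (h : x ∈ Ak D B T k) : x ≠ T :=
  (mem_Ak.mp h).1

/-- Every intermediate vertex of a collider path from `T` to `x` lies in `Ak` (via the
prefix collider path) and differs from `x`. -/
lemma intermediate_mem_Ak {D B : V → V → Prop} {T x : V} {p : List V}
    (hp : ColliderPath D B p T x) {m : ℕ} (h1 : 1 ≤ m) (hm : m + 1 < p.length) :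
    p.get ⟨m, by omega⟩ ∈ Ak D B T (m + 1) ∧ p.get ⟨m, by omega⟩ ≠ x := by
  obtain ⟨hlen, hh, hl, hc, hn, hcol⟩ := hp
  have hq : ColliderPath D B (p.take (m + 1)) T (p.get ⟨m, by omega⟩) :=
    colliderPath_take D B T hh hc hn h1 hm (fun i hi => hcol i (by omega))
  constructor
  · refine mem_Ak.mpr ⟨?_, p.take (m + 1), hq, by simp⟩
    intro hEq
    have h0 : p.get ⟨0, by omega⟩ = T := head?_get hh (by omega)
    have : (⟨m, by omega⟩ : Fin p.length) = ⟨0, by omega⟩ :=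
      hn.get_inj_iff.mp (by rw [hEq, h0])
    have hm0 := congrArg Fin.val this
    simp at hm0
    omega
  · intro hEq
    have hx' : p.get ⟨p.length - 1, by omega⟩ = x := getLast?_get hl (by omega)
    have : (⟨m, by omega⟩ : Fin p.length) = ⟨p.length - 1, by omega⟩ :=
      hn.get_inj_iff.mp (by rw [hEq, hx'])
    have := congrArg Fin.val this
    simp at this
    omega

/-- A collider path whose intermediate vertices all lie in `Z` is m-connecting. -/
lemma not_msep_of_Ak {D B : V → V → Prop} {T x : V} {k : ℕ} {Z : Set V}
    (hx : x ∈ Ak D B T (k + 1)) (hZ : ∀ y ∈ Ak D B T k, y ≠ x → y ∈ Z) :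
    ¬ MSeparated D B Z T x := by
  rw [mem_Ak] at hx
  obtain ⟨hxT, p, hp, hplen⟩ := hx
  intro hsep
  refine hsep ⟨p, hp.1, hp.2.1, hp.2.2.1, hp.2.2.2.1, hp.2.2.2.2.1, ?_⟩
  intro i hi
  have hint := intermediate_mem_Ak ⟨hp.1, hp.2.1, hp.2.2.1, hp.2.2.2.1, hp.2.2.2.2.1,
      hp.2.2.2.2.2⟩ (m := i + 1) (by omega) (by omega)
  have hmem : p.get ⟨i + 1, by omega⟩ ∈ Z := by
    refine hZ _ (Ak_mono (by omega) hint.1) hint.2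
  exact ⟨fun _ => Or.inl hmem, fun hnc => absurd (hp.2.2.2.2.2 i hi) hnc⟩

/-- If `x` is outside the Markov blanket of `T` and `Z` contains the Markov blanket,
then `T` and `x` are m-separated given `Z`. -/
lemma msep_of_notMem_magMB {D B : V → V → Prop} {T x : V} {Z : Set V}
    (hxT : x ≠ T) (hx : x ∉ magMB D B T) (hZ : ↑(magMB D B T) ⊆ Z) :
    MSeparated D B Z T x := by
  rintro ⟨p, hlen, hh, hl, hc, hn, hcond⟩
  by_cases hex : ∃ i, ∃ hi : i + 2 < p.length,
      ¬ (Into D B (p.get ⟨i, by omega⟩) (p.get ⟨i + 1, by omega⟩) ∧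
         Into D B (p.get ⟨i + 2, hi⟩) (p.get ⟨i + 1, by omega⟩))
  · classical
    set i₀ := Nat.find hex with hi₀def
    obtain ⟨hi₀, hnc⟩ := Nat.find_spec hex
    have hq : ColliderPath D B (p.take (i₀ + 2)) T (p.get ⟨i₀ + 1, by omega⟩) := by
      refine colliderPath_take D B T hh hc hn (m := i₀ + 1) (by omega) (by omega) ?_
      intro i hi
      have hlt : i < i₀ := by omega
      have hmin := Nat.find_min hex hlt
      push_neg at hmin
      exact hmin (by omega)
    have hbT : p.get ⟨i₀ + 1, by omega⟩ ≠ T := by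
      intro hEq
      have h0 : p.get ⟨0, by omega⟩ = T := head?_get hh (by omega)
      have : (⟨i₀ + 1, by omega⟩ : Fin p.length) = ⟨0, by omega⟩ :=
        hn.get_inj_iff.mp (by rw [hEq, h0])
      simpa using congrArg Fin.val this
    have hbMB : p.get ⟨i₀ + 1, by omega⟩ ∈ magMB D B T :=
      mem_magMB'.mpr ⟨hbT, p.take (i₀ + 2), hq⟩
    have hbZ : p.get ⟨i₀ + 1, by omega⟩ ∈ Z := hZ (Finset.mem_coe.mpr hbMB)
    exact (hcond i₀ hi₀).2 hnc hbZ
  · push_neg at hex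
    exact hx (mem_magMB'.mpr ⟨hxT, p, hlen, hh, hl, hc, hn, fun i h => hex i h⟩)

end Aux2

section Aux3

open Finset

variable {V : Type*} [Fintype V] [DecidableEq V] {D B : V → V → Prop} {T : V}

/-- The forward phase keeps everything it had, never selects `T`, and ends up containing
`Ak (k+1)` whenever it starts with `Ak k` selected. -/
lemma fwdPhase_result {S₀ S₁ : Finset V} {k : ℕ} (h : FwdPhase D B T S₀ S₁)
    (hT : T ∉ S₀) (hk : Ak D B T k ⊆ S₀) :
    S₀ ⊆ S₁ ∧ T ∉ S₁ ∧ Ak D B T (k + 1) ⊆ S₁ := by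
  obtain ⟨R₁, hrtg, hdone⟩ := h
  have main : ∀ {a b : Finset V × Finset V}, Relation.ReflTransGen (FwdStep D B T) a b →
      (S₀ ⊆ a.1 ∧ T ∉ a.1 ∧ T ∉ a.2 ∧ ∀ x ∈ Ak D B T (k + 1), x ∈ a.1 ∨ x ∈ a.2) →
      (S₀ ⊆ b.1 ∧ T ∉ b.1 ∧ T ∉ b.2 ∧ ∀ x ∈ Ak D B T (k + 1), x ∈ b.1 ∨ x ∈ b.2) := by
    intro a b hab
    induction hab with
    | refl => exact id
    | tail _ hstep ih =>
      intro ha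
      obtain ⟨hsub, hT1, hT2, hall⟩ := ih ha
      obtain ⟨y, hy2, hdep, hq1, hq2⟩ := hstep
      have hyT : y ≠ T := fun hEq => hT2 (hEq ▸ hy2)
      refine ⟨hsub.trans (hq1 ▸ Finset.subset_insert _ _), ?_, ?_, ?_⟩
      · rw [hq1]
        intro hc
        rcases Finset.mem_insert.mp hc with hc | hc
        · exact hyT hc.symm
        · exact hT1 hc
      · rw [hq2]
        intro hc
        exact hT2 (Finset.mem_of_mem_filter T (Finset.mem_of_mem_erase hc))
      · intro x hx
        rcases hall x hx with hx1 | hx2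
        · exact Or.inl (hq1 ▸ Finset.mem_insert_of_mem hx1)
        · by_cases hxy : x = y
          · exact Or.inl (hq1 ▸ hxy ▸ Finset.mem_insert_self _ _)
          · refine Or.inr ?_
            rw [hq2]
            refine Finset.mem_erase.mpr ⟨hxy, Finset.mem_filter.mpr ⟨hx2, ?_⟩⟩
            exact not_msep_of_Ak hx
              (fun y' hy' _ => Finset.mem_coe.mpr (hsub (hk hy')))
  have base : S₀ ⊆ S₀ ∧ T ∉ S₀ ∧ T ∉ (Finset.univ.erase T) \ S₀ ∧
      ∀ x ∈ Ak D B T (k + 1), x ∈ S₀ ∨ x ∈ (Finset.univ.erase T) \ S₀ := by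
    refine ⟨subset_rfl, hT, by simp, ?_⟩
    intro x hx
    by_cases hxS : x ∈ S₀
    · exact Or.inl hxS
    · exact Or.inr (Finset.mem_sdiff.mpr
        ⟨Finset.mem_erase.mpr ⟨ne_T_of_mem_Ak hx, Finset.mem_univ _⟩, hxS⟩)
  obtain ⟨hsub, hT1, _, hall⟩ := main hrtg base
  refine ⟨hsub, hT1, ?_⟩
  intro x hx
  rcases hall x hx with hx1 | hx2
  · exact hx1
  · exact absurd (hdone x hx2)
      (not_msep_of_Ak hx (fun y' hy' _ => Finset.mem_coe.mpr (hsub (hk hy'))))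

/-- Backward elimination never removes a member of `Ak (k+1)` (and never touches `T`). -/
lemma backSteps_result {S₀ S₁ : Finset V} {k : ℕ}
    (h : Relation.ReflTransGen (BackStep D B T) S₀ S₁)
    (hT : T ∉ S₀) (hk : Ak D B T (k + 1) ⊆ S₀) :
    T ∉ S₁ ∧ Ak D B T (k + 1) ⊆ S₁ := by
  induction h with
  | refl => exact ⟨hT, hk⟩
  | tail _ hstep ih =>
    obtain ⟨hT', hk'⟩ := ih
    obtain ⟨x, hxS, hsep, heq⟩ := hstep
    subst heq
    have hxA : x ∉ Ak D B T (k + 1) := by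
      intro hxA
      exact not_msep_of_Ak hxA (fun y hy hyx =>
        Finset.mem_coe.mpr (Finset.mem_erase.mpr ⟨hyx, hk' (Ak_mono (by omega) hy)⟩)) hsep
    exact ⟨fun hc => hT' (Finset.mem_of_mem_erase hc), fun y hy =>
      Finset.mem_erase.mpr ⟨fun hEq => hxA (hEq ▸ hy), hk' hy⟩⟩

/-- One Run grows the guaranteed part of the selection from `Ak k` to `Ak (k+1)`. -/
lemma run_maintains {S₀ S₁ : Finset V} {k : ℕ} (h : FBEDRun D B T S₀ S₁)
    (hT : T ∉ S₀) (hk : Ak D B T k ⊆ S₀) :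
    T ∉ S₁ ∧ Ak D B T (k + 1) ⊆ S₁ := by
  obtain ⟨Sf, hfwd, hbsteps, _⟩ := h
  obtain ⟨_, hTf, hAf⟩ := fwdPhase_result hfwd hT hk
  exact backSteps_result hbsteps hTf hAf

/-- A Run starting from a superset of the Markov blanket returns exactly the blanket. -/
lemma run_final {S₀ S₁ : Finset V} (h : FBEDRun D B T S₀ S₁)
    (hT : T ∉ S₀) (hmb : magMB D B T ⊆ S₀) : S₁ = magMB D B T := by
  obtain ⟨Sf, hfwd, hbsteps, hbdone⟩ := h
  have hk : Ak D B T (Fintype.card V) ⊆ S₀ := by rw [Ak_eq_magMB le_rfl]; exact hmb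
  obtain ⟨_, hTf, hAf⟩ := fwdPhase_result hfwd hT hk
  obtain ⟨hT1, hA1⟩ := backSteps_result hbsteps hTf hAf
  have hmb1 : magMB D B T ⊆ S₁ := by
    rw [← Ak_eq_magMB (Nat.le_succ (Fintype.card V))]
    exact hA1
  refine subset_antisymm ?_ hmb1
  intro x hx
  by_contra hxmb
  have hxT : x ≠ T := fun hEq => hT1 (hEq ▸ hx)
  refine hbdone x hx (msep_of_notMem_magMB hxT hxmb ?_)
  intro y hy
  rw [Finset.mem_coe] at hy ⊢
  exact Finset.mem_erase.mpr ⟨fun hEq => hxmb (hEq ▸ hy), hmb1 hy⟩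

end Aux3

/-- For a distribution faithful to a directed maximal ancestral graph (directed edges `D`,
bi-directed edges `B`; no directed cycles and no almost-directed cycles), the
Forward-Backward with Early Dropping algorithm with an unlimited number of Runs identifies
the Markov blanket of `T`: any sequence of Runs starting from the empty selection
eventually stabilizes on exactly the Markov blanket of `T`. -/
theorem fbed_unlimited_runs_markov_blanket {V : Type*} [Fintype V] [DecidableEq V]
    (D B : V → V → Prop)
    (hBsymm : ∀ a b, B a b → B b a)
    (hacyclic : ∀ v, ¬ Relation.TransGen D v v)
    (hancestral : ∀ a b, B a b → ¬ Relation.TransGen D a b)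
    (T : V) (S : ℕ → Finset V) (h0 : S 0 = ∅)
    (hrun : ∀ n, FBEDRun D B T (S n) (S (n + 1))) :
    ∃ N, ∀ n ≥ N, S n = magMB D B T := by
  have hinv : ∀ n, T ∉ S n ∧ Ak D B T n ⊆ S n := by
    intro n
    induction n with
    | zero =>
      rw [h0, Ak_zero]
      exact ⟨Finset.notMem_empty _, subset_rfl⟩
    | succ n ih => exact run_maintains (hrun n) ih.1 ih.2
  refine ⟨Fintype.card V + 1, ?_⟩
  intro n hn
  obtain ⟨m, rfl⟩ : ∃ m, n = m + 1 := ⟨n - 1, by omega⟩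
  have hm : Fintype.card V ≤ m := by omega
  have hmb : magMB D B T ⊆ S m := by
    rw [← Ak_eq_magMB hm]
    exact (hinv m).2
  exact run_final (hrun m) (hinv m).1 hmb
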